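/- arXiv:1912.09818 — 3 statements merged into one kernel-verified Lean document; each statement's English description precedes it below -/
import Mathlib

section
/- Let v_1, …, v_k be unit vectors in ℝ^d with ⟨v_i, v_j⟩ ≥ s for all i, j, where s ≥ 0. Let a, b ∈ ℝ^k be entrywise non-negative vectors with Σ_i a_i > 0 and Σ_i b_i > 0. Then the cosine similarity satisfies s_cos(Σ_i a_i v_i, Σ_i b_i v_i) ≥ s. In particular, the minimum pairwise cosine similarity s_n between the columns of the partial products M_n = A_1⋯A_n of entrywise non-negative matrices with no zero columns is monotonically non-decreasing in n, and hence converges. -/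
open Filter

/-- Cosine similarity of two vectors in `ℝ^d`. -/
noncomputable def scos {d : ℕ} (u v : Fin d → ℝ) : ℝ :=
  (∑ i, u i * v i) / (Real.sqrt (∑ i, u i ^ 2) * Real.sqrt (∑ i, v i ^ 2))

open RealInnerProductSpace

lemma scos_le_one {d : ℕ} (u v : Fin d → ℝ) : scos u v ≤ 1 := by
  unfold scos
  set D := Real.sqrt (∑ i, u i ^ 2) * Real.sqrt (∑ i, v i ^ 2) with hD
  have hD0 : 0 ≤ D := mul_nonneg (Real.sqrt_nonneg _) (Real.sqrt_nonneg _)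
  rcases eq_or_lt_of_le hD0 with h | h
  · simp [← h]
  · rw [div_le_one h]
    calc (∑ i, u i * v i) ≤ |∑ i, u i * v i| := le_abs_self _
    _ = Real.sqrt ((∑ i, u i * v i)^2) := (Real.sqrt_sq_eq_abs _).symm
    _ ≤ Real.sqrt ((∑ i, u i ^ 2) * (∑ i, v i ^ 2)) := by
        apply Real.sqrt_le_sqrt
        exact Finset.sum_mul_sq_le_sq_mul_sq Finset.univ u v
    _ = D := by rw [hD, Real.sqrt_mul (Finset.sum_nonneg fun i _ => sq_nonneg _)]

lemma scos_nonneg {d : ℕ} (u v : Fin d → ℝ) (hu : ∀ i, 0 ≤ u i) (hv : ∀ i, 0 ≤ v i) :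
    0 ≤ scos u v :=
  div_nonneg (Finset.sum_nonneg fun i _ => mul_nonneg (hu i) (hv i))
    (mul_nonneg (Real.sqrt_nonneg _) (Real.sqrt_nonneg _))

lemma scos_key {d k : ℕ} (s : ℝ) (hs : 0 ≤ s)
    (v : Fin k → Fin d → ℝ)
    (hunit : ∀ i, Real.sqrt (∑ t, v i t ^ 2) = 1)
    (hinner : ∀ i j, s ≤ ∑ t, v i t * v j t)
    (a b : Fin k → ℝ)
    (ha : ∀ i, 0 ≤ a i) (hb : ∀ i, 0 ≤ b i)
    (hasum : 0 < ∑ i, a i) (hbsum : 0 < ∑ i, b i) :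
    s ≤ scos (fun t => ∑ i, a i * v i t) (fun t => ∑ i, b i * v i t) := by
  classical
  set V : Fin k → EuclideanSpace ℝ (Fin d) := fun i => WithLp.toLp 2 (v i) with hV
  have hVnorm : ∀ i, ‖V i‖ = 1 := by
    intro i
    rw [EuclideanSpace.norm_eq]
    simpa [sq_abs] using hunit i
  set x : EuclideanSpace ℝ (Fin d) := ∑ i, a i • V i with hx
  set y : EuclideanSpace ℝ (Fin d) := ∑ i, b i • V i with hy
  have hxt : ∀ t, x t = ∑ i, a i * v i t := by
    intro t; rw [hx, WithLp.ofLp_sum, Finset.sum_apply]; simp [V, smul_eq_mul]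
  have hyt : ∀ t, y t = ∑ i, b i * v i t := by
    intro t; rw [hy, WithLp.ofLp_sum, Finset.sum_apply]; simp [V, smul_eq_mul]
  have hxnorm : ‖x‖ ≤ ∑ i, a i := by
    calc ‖x‖ ≤ ∑ i, ‖a i • V i‖ := norm_sum_le _ _
    _ = ∑ i, a i := by
        refine Finset.sum_congr rfl fun i _ => ?_
        rw [norm_smul, hVnorm, Real.norm_eq_abs, abs_of_nonneg (ha i), mul_one]
  have hynorm : ‖y‖ ≤ ∑ i, b i := by
    calc ‖y‖ ≤ ∑ i, ‖b i • V i‖ := norm_sum_le _ _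
    _ = ∑ i, b i := by
        refine Finset.sum_congr rfl fun i _ => ?_
        rw [norm_smul, hVnorm, Real.norm_eq_abs, abs_of_nonneg (hb i), mul_one]
  have hinnerVij : ∀ i j, ⟪V i, V j⟫ = ∑ t, v i t * v j t := by
    intro i j
    rw [PiLp.inner_apply]
    simp [V, RCLike.inner_apply, mul_comm]
  have hN : s * ((∑ i, a i) * (∑ i, b i)) ≤ ⟪x, y⟫ := by
    rw [hx, sum_inner]
    calc s * ((∑ i, a i) * (∑ i, b i))
        = ∑ i, ∑ j, a i * b j * s := by
          rw [Finset.sum_mul_sum, Finset.mul_sum]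
          refine Finset.sum_congr rfl fun i _ => ?_
          rw [Finset.mul_sum]
          exact Finset.sum_congr rfl fun j _ => by ring
    _ ≤ ∑ i, ∑ j, a i * b j * ⟪V i, V j⟫ := by
          refine Finset.sum_le_sum fun i _ => Finset.sum_le_sum fun j _ => ?_
          refine mul_le_mul_of_nonneg_left ?_ (mul_nonneg (ha i) (hb j))
          rw [hinnerVij]; exact hinner i j
    _ = ∑ i, ⟪a i • V i, y⟫ := by
          refine Finset.sum_congr rfl fun i _ => ?_
          rw [hy, inner_sum]
          refine Finset.sum_congr rfl fun j _ => ?_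
          rw [real_inner_smul_left, real_inner_smul_right]; ring
  have hinner_xy : ⟪x, y⟫ = ∑ t, x t * y t := by
    rw [PiLp.inner_apply]; simp [RCLike.inner_apply, mul_comm]
  have hxn : Real.sqrt (∑ t, x t ^ 2) = ‖x‖ := by
    rw [EuclideanSpace.norm_eq]; simp [sq_abs]
  have hyn : Real.sqrt (∑ t, y t ^ 2) = ‖y‖ := by
    rw [EuclideanSpace.norm_eq]; simp [sq_abs]
  have hxfun : (fun t => ∑ i, a i * v i t) = fun t => x t := by
    funext t; rw [hxt]
  have hyfun : (fun t => ∑ i, b i * v i t) = fun t => y t := by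
    funext t; rw [hyt]
  rw [hxfun, hyfun]
  show s ≤ (∑ t, x t * y t) / (Real.sqrt (∑ t, x t ^ 2) * Real.sqrt (∑ t, y t ^ 2))
  rw [← hinner_xy, hxn, hyn]
  have hD0 : 0 ≤ ‖x‖ * ‖y‖ := mul_nonneg (norm_nonneg _) (norm_nonneg _)
  rcases eq_or_lt_of_le hD0 with h | h
  · have hxy0 : ⟪x, y⟫ = 0 := by
      rcases mul_eq_zero.mp h.symm with h0 | h0
      · rw [norm_eq_zero.mp h0, inner_zero_left]
      · rw [norm_eq_zero.mp h0, inner_zero_right]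
    have hle : s * ((∑ i, a i) * (∑ i, b i)) ≤ 0 := hxy0 ▸ hN
    have hs0 : s ≤ 0 := by
      by_contra hc
      push_neg at hc
      have := mul_pos hc (mul_pos hasum hbsum)
      linarith
    simp [← h, hxy0, le_antisymm hs0 hs]
  · rw [le_div_iff₀ h]
    calc s * (‖x‖ * ‖y‖) ≤ s * ((∑ i, a i) * (∑ i, b i)) :=
          mul_le_mul_of_nonneg_left
            (mul_le_mul hxnorm hynorm (norm_nonneg _) hasum.le) hs
    _ ≤ ⟪x, y⟫ := hN

lemma Mstep {e : ℕ} (B : ℕ → Matrix (Fin e) (Fin e) ℝ) (n : ℕ) :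
    ((List.range (n+1)).map B).prod = ((List.range n).map B).prod * B n := by
  rw [List.range_succ, List.map_append, List.prod_append]
  simp

lemma Mnonneg {e : ℕ} (B : ℕ → Matrix (Fin e) (Fin e) ℝ)
    (hB : ∀ n i j, 0 ≤ B n i j) :
    ∀ n i j, 0 ≤ ((List.range n).map B).prod i j := by
  intro n
  induction n with
  | zero =>
    intro i j
    simp only [List.range_zero, List.map_nil, List.prod_nil]
    rw [Matrix.one_apply]
    split <;> norm_num
  | succ n ih =>
    intro i j
    rw [Mstep, Matrix.mul_apply]
    exact Finset.sum_nonneg fun r _ => mul_nonneg (ih i r) (hB n r j)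

lemma Mcolpos {e : ℕ} (B : ℕ → Matrix (Fin e) (Fin e) ℝ)
    (hB : ∀ n i j, 0 ≤ B n i j) (hBcol : ∀ n j, ∃ i, B n i j ≠ 0) :
    ∀ n j, ∃ t, 0 < ((List.range n).map B).prod t j := by
  intro n
  induction n with
  | zero =>
    intro j
    refine ⟨j, ?_⟩
    simp only [List.range_zero, List.map_nil, List.prod_nil]
    rw [Matrix.one_apply_eq]
    norm_num
  | succ n ih =>
    intro j
    obtain ⟨i, hi⟩ := hBcol n j
    have hBpos : 0 < B n i j := lt_of_le_of_ne (hB n i j) (Ne.symm hi)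
    obtain ⟨t, ht⟩ := ih i
    refine ⟨t, ?_⟩
    rw [Mstep, Matrix.mul_apply]
    refine Finset.sum_pos' (fun r _ => mul_nonneg (Mnonneg B hB n t r) (hB n r j))
      ⟨i, Finset.mem_univ i, mul_pos ht hBpos⟩

lemma sigma_step {e : ℕ} (B : ℕ → Matrix (Fin e) (Fin e) ℝ)
    (hB : ∀ n i j, 0 ≤ B n i j) (hBcol : ∀ n j, ∃ i, B n i j ≠ 0)
    (hne : (Finset.univ.offDiag : Finset (Fin e × Fin e)).Nonempty) (n : ℕ) :
    Finset.inf' Finset.univ.offDiag hne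
      (fun p => scos (fun i => (((List.range n).map B).prod) i p.1)
                     (fun i => (((List.range n).map B).prod) i p.2))
    ≤ Finset.inf' Finset.univ.offDiag hne
      (fun p => scos (fun i => (((List.range (n+1)).map B).prod) i p.1)
                     (fun i => (((List.range (n+1)).map B).prod) i p.2)) := by
  classical
  set M : ℕ → Matrix (Fin e) (Fin e) ℝ := fun m => ((List.range m).map B).prod with hM
  set L : ℝ := Finset.inf' Finset.univ.offDiag hne
      (fun p => scos (fun i => M n i p.1) (fun i => M n i p.2)) with hL
  set c : Fin e → ℝ := fun i => Real.sqrt (∑ t, M n t i ^ 2) with hc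
  have hcpos : ∀ i, 0 < c i := by
    intro i
    apply Real.sqrt_pos.mpr
    obtain ⟨t, ht⟩ := Mcolpos B hB hBcol n i
    exact Finset.sum_pos' (fun r _ => sq_nonneg _) ⟨t, Finset.mem_univ t, by positivity⟩
  set v : Fin e → Fin e → ℝ := fun i t => M n t i / c i with hv
  have hLnn : 0 ≤ L := by
    refine Finset.le_inf' hne _ fun p hp => ?_
    exact scos_nonneg _ _ (fun t => Mnonneg B hB n t p.1) (fun t => Mnonneg B hB n t p.2)
  have hL1 : L ≤ 1 := by
    obtain ⟨p, hp⟩ := hne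
    exact (Finset.inf'_le _ hp).trans (scos_le_one _ _)
  have hunit : ∀ i, Real.sqrt (∑ t, v i t ^ 2) = 1 := by
    intro i
    have h1 : ∑ t, v i t ^ 2 = (∑ t, M n t i ^ 2) / (c i) ^ 2 := by
      rw [Finset.sum_div]
      exact Finset.sum_congr rfl fun t _ => by rw [div_pow]
    rw [h1, Real.sqrt_div (Finset.sum_nonneg fun t _ => sq_nonneg _),
      Real.sqrt_sq (hcpos i).le]
    exact div_self (hcpos i).ne'
  have hsq : ∀ i, ∑ t, v i t * v i t = 1 := by
    intro i
    have h0 : 0 ≤ ∑ t, v i t ^ 2 := Finset.sum_nonneg fun t _ => sq_nonneg _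
    have h1 := hunit i
    have h2 : ∑ t, v i t ^ 2 = 1 := by nlinarith [Real.sq_sqrt h0]
    calc ∑ t, v i t * v i t = ∑ t, v i t ^ 2 :=
          Finset.sum_congr rfl fun t _ => (sq (v i t)).symm ▸ by ring
    _ = 1 := h2
  have hvsum_eq : ∀ i j, ∑ t, v i t * v j t
      = (∑ t, M n t i * M n t j) / (c i * c j) := by
    intro i j
    rw [Finset.sum_div]
    exact Finset.sum_congr rfl fun t _ => div_mul_div_comm _ _ _ _
  have hinner : ∀ i j, L ≤ ∑ t, v i t * v j t := by
    intro i j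
    by_cases hij : i = j
    · subst hij; rw [hsq i]; exact hL1
    · have hmem : (i, j) ∈ (Finset.univ.offDiag : Finset (Fin e × Fin e)) :=
        Finset.mem_offDiag.mpr ⟨Finset.mem_univ _, Finset.mem_univ _, hij⟩
      have := Finset.inf'_le
        (fun p : Fin e × Fin e => scos (fun t => M n t p.1) (fun t => M n t p.2)) hmem
      rw [hvsum_eq]
      exact this
  refine Finset.le_inf' hne _ fun p hp => ?_
  obtain ⟨-, -, hpq⟩ := Finset.mem_offDiag.mp hp
  set a : Fin e → ℝ := fun i => B n i p.1 * c i with ha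
  set b : Fin e → ℝ := fun i => B n i p.2 * c i with hb
  have hann : ∀ i, 0 ≤ a i := fun i => mul_nonneg (hB n i p.1) (hcpos i).le
  have hbnn : ∀ i, 0 ≤ b i := fun i => mul_nonneg (hB n i p.2) (hcpos i).le
  have hasum : 0 < ∑ i, a i := by
    obtain ⟨i, hi⟩ := hBcol n p.1
    exact Finset.sum_pos' (fun r _ => hann r)
      ⟨i, Finset.mem_univ i, mul_pos (lt_of_le_of_ne (hB n i p.1) (Ne.symm hi)) (hcpos i)⟩
  have hbsum : 0 < ∑ i, b i := by
    obtain ⟨i, hi⟩ := hBcol n p.2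
    exact Finset.sum_pos' (fun r _ => hbnn r)
      ⟨i, Finset.mem_univ i, mul_pos (lt_of_le_of_ne (hB n i p.2) (Ne.symm hi)) (hcpos i)⟩
  have key := scos_key L hLnn v hunit hinner a b hann hbnn hasum hbsum
  have hcol : ∀ (q : Fin e) (w : Fin e → ℝ) (_ : w = fun i => B n i q * c i),
      (fun t => ∑ i, w i * v i t) = fun t => M (n+1) t q := by
    intro q w hw
    funext t
    rw [hM]
    show ∑ i, w i * v i t = ((List.range (n+1)).map B).prod t q
    rw [Mstep, Matrix.mul_apply]
    refine Finset.sum_congr rfl fun i _ => ?_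
    rw [hw]
    show B n i q * c i * (M n t i / c i) = M n t i * B n i q
    have hci : c i ≠ 0 := (hcpos i).ne'
    field_simp
  rw [hcol p.1 a ha, hcol p.2 b hb] at key
  exact key

/-- Step (2) of the proof of Theorem 1: non-negative combinations of unit vectors
whose pairwise inner products are at least `s ≥ 0` again have cosine similarity at
least `s`; consequently the minimal pairwise cosine similarity between the columns of
the partial products of entrywise non-negative matrices with no zero columns is
monotonically non-decreasing and hence converges. -/
theorem cosine_similarity_monotone
    {d k : ℕ} (s : ℝ) (hs : 0 ≤ s)
    (v : Fin k → Fin d → ℝ)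
    (hunit : ∀ i, Real.sqrt (∑ t, v i t ^ 2) = 1)
    (hinner : ∀ i j, s ≤ ∑ t, v i t * v j t)
    (a b : Fin k → ℝ)
    (ha : ∀ i, 0 ≤ a i) (hb : ∀ i, 0 ≤ b i)
    (hasum : 0 < ∑ i, a i) (hbsum : 0 < ∑ i, b i) :
    s ≤ scos (fun t => ∑ i, a i * v i t) (fun t => ∑ i, b i * v i t) ∧
    (∀ (e : ℕ) (he : 2 ≤ e) (B : ℕ → Matrix (Fin e) (Fin e) ℝ),
      (∀ n i j, 0 ≤ B n i j) → (∀ n j, ∃ i, B n i j ≠ 0) →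
      ∀ σ : ℕ → ℝ,
      (∀ n, σ n =
        Finset.inf' (Finset.univ.offDiag)
          (by
            have h0 : (0 : ℕ) < e := by omega
            have h1 : (1 : ℕ) < e := by omega
            refine ⟨(⟨0, h0⟩, ⟨1, h1⟩), Finset.mem_offDiag.mpr
              ⟨Finset.mem_univ _, Finset.mem_univ _, ?_⟩⟩
            simp [Fin.ext_iff])
          (fun p => scos (fun i => (((List.range n).map B).prod) i p.1)
                         (fun i => (((List.range n).map B).prod) i p.2))) →
      Monotone σ ∧ ∃ Lval : ℝ, Tendsto σ atTop (nhds Lval)) := by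
  constructor
  · exact scos_key s hs v hunit hinner a b ha hb hasum hbsum
  · intro e he B hB hBcol σ hσ
    have hne : (Finset.univ.offDiag : Finset (Fin e × Fin e)).Nonempty := by
      have h0 : (0 : ℕ) < e := by omega
      have h1 : (1 : ℕ) < e := by omega
      exact ⟨(⟨0, h0⟩, ⟨1, h1⟩), Finset.mem_offDiag.mpr
        ⟨Finset.mem_univ _, Finset.mem_univ _, by simp [Fin.ext_iff]⟩⟩
    have hmono : Monotone σ := by
      apply monotone_nat_of_le_succ
      intro n
      rw [hσ n, hσ (n + 1)]
      exact sigma_step B hB hBcol _ n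
    refine ⟨hmono, ?_⟩
    have hbdd : BddAbove (Set.range σ) := by
      refine ⟨1, ?_⟩
      rintro x ⟨n, rfl⟩
      rw [hσ n]
      obtain ⟨p, hp⟩ := hne
      exact (Finset.inf'_le _ hp).trans (scos_le_one _ _)
    exact ⟨_, tendsto_atTop_ciSup hmono hbdd⟩
end

section
/- Let v_1, …, v_k be unit vectors in ℝ^d with ⟨v_i, v_j⟩ ≥ s for all i, j, where s ≥ 0. Suppose in addition that for some pair l ≠ m and some ε > 0 one has ⟨v_l, v_m⟩ ≥ (1+ε)·s. Then for all entrywise non-negative a, b ∈ ℝ^k with Σ_i a_i > 0 and Σ_i b_i > 0, the cosine similarity satisfies s_cos(Σ_i a_i v_i, Σ_i b_i v_i) ≥ (1 + ε·(a_l b_m + a_m b_l)/((Σ_i a_i)(Σ_i b_i))) · s. -/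
/-- Case-1 lower bound in step (3) of the proof of Theorem 1: if additionally one
pair of the unit vectors has inner product at least `(1+ε)·s`, the cosine similarity
of non-negative combinations improves by the stated factor. -/
theorem cosine_similarity_case1_bound
    {d k : ℕ} (s ε : ℝ) (hs : 0 ≤ s) (hε : 0 < ε)
    (v : Fin k → Fin d → ℝ)
    (hunit : ∀ i, Real.sqrt (∑ t, v i t ^ 2) = 1)
    (hinner : ∀ i j, s ≤ ∑ t, v i t * v j t)
    (l m : Fin k) (hlm : l ≠ m)
    (hpair : (1 + ε) * s ≤ ∑ t, v l t * v m t)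
    (a b : Fin k → ℝ)
    (ha : ∀ i, 0 ≤ a i) (hb : ∀ i, 0 ≤ b i)
    (hasum : 0 < ∑ i, a i) (hbsum : 0 < ∑ i, b i) :
    (1 + ε * (a l * b m + a m * b l) / ((∑ i, a i) * (∑ i, b i))) * s ≤
      scos (fun t => ∑ i, a i * v i t) (fun t => ∑ i, b i * v i t) := by
  set A := ∑ i, a i with hA
  set B := ∑ i, b i with hB
  set w : Fin k → Fin k → ℝ := fun i j => ∑ t, v i t * v j t with hw
  -- basic facts about w
  have hw_symm : ∀ i j, w i j = w j i := by
    intro i j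
    exact Finset.sum_congr rfl fun t _ => mul_comm _ _
  have hw_ge : ∀ i j, s ≤ w i j := hinner
  have hw_le : ∀ i j, w i j ≤ 1 := by
    intro i j
    have := Real.sum_mul_le_sqrt_mul_sqrt Finset.univ (v i) (v j)
    rwa [hunit i, hunit j, one_mul] at this
  have hw_diag : ∀ i, w i i = 1 := by
    intro i
    have h0 : 0 ≤ ∑ t, v i t ^ 2 := Finset.sum_nonneg fun t _ => sq_nonneg _
    have := hunit i
    have h1 : ∑ t, v i t ^ 2 = 1 := by
      nlinarith [Real.sq_sqrt h0]
    simpa [hw, pow_two] using h1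
  -- expansion of bilinear sums
  have expand : ∀ (c e : Fin k → ℝ),
      (∑ t, (∑ i, c i * v i t) * (∑ j, e j * v j t))
        = ∑ i, ∑ j, c i * e j * w i j := by
    intro c e
    simp_rw [Finset.sum_mul_sum]
    rw [Finset.sum_comm]
    refine Finset.sum_congr rfl fun i _ => ?_
    rw [Finset.sum_comm]
    refine Finset.sum_congr rfl fun j _ => ?_
    rw [Finset.mul_sum]
    exact Finset.sum_congr rfl fun t _ => by ring
  set N := ∑ t, (∑ i, a i * v i t) * (∑ j, b j * v j t) with hN
  set P := ∑ t, (∑ i, a i * v i t) ^ 2 with hP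
  set Q := ∑ t, (∑ i, b i * v i t) ^ 2 with hQ
  have hPe : P = ∑ i, ∑ j, a i * a j * w i j := by
    rw [hP]; simp_rw [pow_two]; exact expand a a
  have hQe : Q = ∑ i, ∑ j, b i * b j * w i j := by
    rw [hQ]; simp_rw [pow_two]; exact expand b b
  have hNe : N = ∑ i, ∑ j, a i * b j * w i j := expand a b
  -- generic split lemmas
  have split1 : ∀ (j0 : Fin k) (f : Fin k → ℝ),
      ∑ j, f j = (∑ j ∈ Finset.univ \ {j0}, f j) + f j0 := by
    intro j0 f
    rw [← Finset.sum_sdiff (Finset.subset_univ {j0}), Finset.sum_singleton]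
  have split2 : ∀ (f : Fin k → ℝ),
      ∑ i, f i = (∑ i ∈ Finset.univ \ {l, m}, f i) + (f l + f m) := by
    intro f
    rw [← Finset.sum_sdiff (Finset.subset_univ {l, m}), Finset.sum_pair hlm]
  -- lower bound on N
  have hNlow : A * B * s + ε * s * (a l * b m + a m * b l) ≤ N := by
    have hterm : ∀ i j, a i * b j * s ≤ a i * b j * w i j := fun i j =>
      mul_le_mul_of_nonneg_left (hw_ge i j) (mul_nonneg (ha i) (hb j))
    have hrow : ∀ i, ∑ j, a i * b j * s ≤ ∑ j, a i * b j * w i j := fun i =>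
      Finset.sum_le_sum fun j _ => hterm i j
    have key : ∑ i, ∑ j, a i * b j * s + (a l * b m * (ε * s) + a m * b l * (ε * s))
        ≤ ∑ i, ∑ j, a i * b j * w i j := by
      have hlrow : ∑ j, a l * b j * s + a l * b m * (ε * s) ≤ ∑ j, a l * b j * w l j := by
        have h2 : a l * b m * s + a l * b m * (ε * s) ≤ a l * b m * w l m := by
          have := mul_le_mul_of_nonneg_left hpair (mul_nonneg (ha l) (hb m))
          nlinarith
        rw [split1 m (fun j => a l * b j * s), split1 m (fun j => a l * b j * w l j)]
        have h1 : ∑ j ∈ Finset.univ \ {m}, a l * b j * s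
            ≤ ∑ j ∈ Finset.univ \ {m}, a l * b j * w l j :=
          Finset.sum_le_sum fun j _ => hterm l j
        linarith
      have hmrow : ∑ j, a m * b j * s + a m * b l * (ε * s) ≤ ∑ j, a m * b j * w m j := by
        have h2 : a m * b l * s + a m * b l * (ε * s) ≤ a m * b l * w m l := by
          have h3 : (1 + ε) * s ≤ w m l := by rw [hw_symm m l]; exact hpair
          have := mul_le_mul_of_nonneg_left h3 (mul_nonneg (ha m) (hb l))
          nlinarith
        rw [split1 l (fun j => a m * b j * s), split1 l (fun j => a m * b j * w m j)]
        have h1 : ∑ j ∈ Finset.univ \ {l}, a m * b j * s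
            ≤ ∑ j ∈ Finset.univ \ {l}, a m * b j * w m j :=
          Finset.sum_le_sum fun j _ => hterm m j
        linarith
      rw [split2 (fun i => ∑ j, a i * b j * s), split2 (fun i => ∑ j, a i * b j * w i j)]
      have h0 : ∑ i ∈ Finset.univ \ {l, m}, ∑ j, a i * b j * s
          ≤ ∑ i ∈ Finset.univ \ {l, m}, ∑ j, a i * b j * w i j :=
        Finset.sum_le_sum fun i _ => hrow i
      linarith
    have hsum_s : ∑ i, ∑ j, a i * b j * s = A * B * s := by
      rw [hA, hB, Finset.sum_mul, Finset.sum_mul]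
      refine Finset.sum_congr rfl fun i _ => ?_
      rw [← Finset.sum_mul, ← Finset.mul_sum]
    rw [hNe]
    calc A * B * s + ε * s * (a l * b m + a m * b l)
        = ∑ i, ∑ j, a i * b j * s + (a l * b m * (ε * s) + a m * b l * (ε * s)) := by
          rw [hsum_s]; ring
      _ ≤ _ := key
  -- upper bounds on P, Q
  have hPle : P ≤ A ^ 2 := by
    rw [hPe]
    calc ∑ i, ∑ j, a i * a j * w i j ≤ ∑ i, ∑ j, a i * a j * 1 :=
          Finset.sum_le_sum fun i _ => Finset.sum_le_sum fun j _ =>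
            mul_le_mul_of_nonneg_left (hw_le i j) (mul_nonneg (ha i) (ha j))
      _ = A ^ 2 := by
          simp only [mul_one]
          simp_rw [← Finset.mul_sum]
          rw [← Finset.sum_mul, hA, sq]
  have hQle : Q ≤ B ^ 2 := by
    rw [hQe]
    calc ∑ i, ∑ j, b i * b j * w i j ≤ ∑ i, ∑ j, b i * b j * 1 :=
          Finset.sum_le_sum fun i _ => Finset.sum_le_sum fun j _ =>
            mul_le_mul_of_nonneg_left (hw_le i j) (mul_nonneg (hb i) (hb j))
      _ = B ^ 2 := by
          simp only [mul_one]
          simp_rw [← Finset.mul_sum]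
          rw [← Finset.sum_mul, hB, sq]
  -- positivity of P, Q
  have exists_pos : ∀ (c : Fin k → ℝ), (∀ i, 0 ≤ c i) → 0 < ∑ i, c i → ∃ i, 0 < c i := by
    intro c hc hcs
    by_contra h
    push_neg at h
    have : ∑ i, c i = 0 := Finset.sum_eq_zero fun i _ => le_antisymm (h i) (hc i)
    linarith
  have hPpos : 0 < P := by
    obtain ⟨i0, hi0⟩ := exists_pos a ha hasum
    rw [hPe]
    refine Finset.sum_pos' (fun i _ => Finset.sum_nonneg fun j _ =>
      mul_nonneg (mul_nonneg (ha i) (ha j)) (le_trans hs (hw_ge i j)))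
      ⟨i0, Finset.mem_univ i0, ?_⟩
    refine Finset.sum_pos' (fun j _ =>
      mul_nonneg (mul_nonneg (ha i0) (ha j)) (le_trans hs (hw_ge i0 j)))
      ⟨i0, Finset.mem_univ i0, ?_⟩
    rw [hw_diag i0]
    nlinarith
  have hQpos : 0 < Q := by
    obtain ⟨i0, hi0⟩ := exists_pos b hb hbsum
    rw [hQe]
    refine Finset.sum_pos' (fun i _ => Finset.sum_nonneg fun j _ =>
      mul_nonneg (mul_nonneg (hb i) (hb j)) (le_trans hs (hw_ge i j)))
      ⟨i0, Finset.mem_univ i0, ?_⟩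
    refine Finset.sum_pos' (fun j _ =>
      mul_nonneg (mul_nonneg (hb i0) (hb j)) (le_trans hs (hw_ge i0 j)))
      ⟨i0, Finset.mem_univ i0, ?_⟩
    rw [hw_diag i0]
    nlinarith
  -- sqrt bounds
  have hsP : Real.sqrt P ≤ A := by
    calc Real.sqrt P ≤ Real.sqrt (A ^ 2) := Real.sqrt_le_sqrt hPle
      _ = A := Real.sqrt_sq hasum.le
  have hsQ : Real.sqrt Q ≤ B := by
    calc Real.sqrt Q ≤ Real.sqrt (B ^ 2) := Real.sqrt_le_sqrt hQle
      _ = B := Real.sqrt_sq hbsum.le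
  have hsPpos : 0 < Real.sqrt P := Real.sqrt_pos.mpr hPpos
  have hsQpos : 0 < Real.sqrt Q := Real.sqrt_pos.mpr hQpos
  -- extra nonnegativity
  have hextra : 0 ≤ ε * s * (a l * b m + a m * b l) := by
    have := ha l; have := ha m; have := hb l; have := hb m
    positivity
  have hNnn : 0 ≤ N := by nlinarith [mul_pos hasum hbsum]
  -- finish
  show (1 + ε * (a l * b m + a m * b l) / (A * B)) * s ≤ N / (Real.sqrt P * Real.sqrt Q)
  have hAB : 0 < A * B := mul_pos hasum hbsum
  have step1 : N / (A * B) ≤ N / (Real.sqrt P * Real.sqrt Q) := by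
    apply div_le_div_of_nonneg_left hNnn (mul_pos hsPpos hsQpos)
    exact mul_le_mul hsP hsQ hsQpos.le hasum.le
  have step2 : (1 + ε * (a l * b m + a m * b l) / (A * B)) * s ≤ N / (A * B) := by
    rw [← sub_nonneg]
    have heq : N / (A * B) - (1 + ε * (a l * b m + a m * b l) / (A * B)) * s
        = (N - (A * B * s + ε * s * (a l * b m + a m * b l))) / (A * B) := by
      field_simp
    rw [heq]
    apply div_nonneg _ hAB.le
    linarith
  linarith
end

section
/- Let a, b ∈ ℝ^k be vectors such that for every pair of indices i < j, either (a_i·b_j = 0 and a_j·b_i = 0) or (a_i·a_j = 0 and b_i·b_j = 0). Then exactly one of the following holds: (i) for every index i, a_i = 0 or b_i = 0; or (ii) there exists an index l with a_l ≠ 0 and b_l ≠ 0 such that a_i = b_i = 0 for all i ≠ l. -/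
/-- Step (5) of the proof of Theorem 1: if for every pair of indices `i < j` either
`a_i b_j = a_j b_i = 0` or `a_i a_j = b_i b_j = 0`, then exactly one of the following
holds: (i) at every index one of `a`, `b` vanishes; (ii) there is a single index `l`
where both `a` and `b` are nonzero and both vanish everywhere else. -/
theorem limit_equations_characterization
    {k : ℕ} (a b : Fin k → ℝ)
    (h : ∀ i j : Fin k, i < j →
      (a i * b j = 0 ∧ a j * b i = 0) ∨ (a i * a j = 0 ∧ b i * b j = 0)) :
    Xor' (∀ i, a i = 0 ∨ b i = 0)
      (∃ l, a l ≠ 0 ∧ b l ≠ 0 ∧ ∀ i, i ≠ l → a i = 0 ∧ b i = 0) := by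
  by_cases hi : ∀ i, a i = 0 ∨ b i = 0
  · left
    refine ⟨hi, ?_⟩
    rintro ⟨l, hal, hbl, -⟩
    rcases hi l with h0 | h0
    · exact hal h0
    · exact hbl h0
  · right
    refine ⟨?_, hi⟩
    push_neg at hi
    obtain ⟨l, hal, hbl⟩ := hi
    refine ⟨l, hal, hbl, fun i hil => ?_⟩
    rcases lt_trichotomy i l with hlt | heq | hgt
    · rcases h i l hlt with ⟨h1, h2⟩ | ⟨h1, h2⟩
      · exact ⟨(mul_eq_zero.1 h1).resolve_right hbl,
          (mul_eq_zero.1 h2).resolve_left hal⟩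
      · exact ⟨(mul_eq_zero.1 h1).resolve_right hal,
          (mul_eq_zero.1 h2).resolve_right hbl⟩
    · exact absurd heq hil
    · rcases h l i hgt with ⟨h1, h2⟩ | ⟨h1, h2⟩
      · exact ⟨(mul_eq_zero.1 h2).resolve_right hbl,
          (mul_eq_zero.1 h1).resolve_left hal⟩
      · exact ⟨(mul_eq_zero.1 h1).resolve_left hal,
          (mul_eq_zero.1 h2).resolve_left hbl⟩
end
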